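/- arXiv:0811.3543 — 3 statements merged into one kernel-verified Lean document; each statement's English description precedes it below -/
import Mathlib

section
/- For every ε > 0 and every i ∈ ℤ^d, the one-site decoupled map Φ_{ε,i} makes the coordinate x_i independent of the other coordinates: (Φ_{ε,i}(x))_i = x_i for all x ∈ X, and whenever x, y ∈ X satisfy x_k = y_k for all k ≠ i, then (Φ_{ε,i}(x))_k = (Φ_{ε,i}(y))_k for all k ≠ i. -/
open MeasureTheory Set Filter

abbrev Site (d : ℕ) : Type := Fin d → ℤ

abbrev XX (d : ℕ) : Type := Site d → Set.Icc (0:ℝ) 1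

def VFinset (d : ℕ) : Finset (Site d) :=
  (Finset.univ.image fun j : Fin d => (Pi.single j 1 : Site d)) ∪
    (Finset.univ.image fun j : Fin d => -(Pi.single j 1 : Site d))

def DependsOnFn (d : ℕ) (φ : XX d → ℝ) (Λ : Finset (Site d)) : Prop :=
  ∀ x y : XX d, (∀ i ∈ Λ, x i = y i) → φ x = φ y

noncomputable def xslice (d : ℕ) (φ : XX d → ℝ) (i : Site d) (x : XX d) : ℝ → ℝ :=
  fun t => φ (Function.update x i (Set.projIcc (0:ℝ) 1 zero_le_one t))

def LocalC1 (d : ℕ) (φ : XX d → ℝ) : Prop :=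
  (∃ Λ : Finset (Site d), DependsOnFn d φ Λ) ∧
    ∀ (i : Site d) (x : XX d), ContDiffOn ℝ 1 (xslice d φ i x) (Set.Icc 0 1)

noncomputable def pd (d : ℕ) (φ : XX d → ℝ) (i : Site d) (x : XX d) : ℝ :=
  derivWithin (xslice d φ i x) (Set.Icc 0 1) (↑(x i))

def HasPD (d : ℕ) (φ : XX d → ℝ) (i : Site d) (x : XX d) : Prop :=
  DifferentiableWithinAt ℝ (xslice d φ i x) (Set.Icc 0 1) (↑(x i))

noncomputable def sint {α : Type*} [MeasurableSpace α] (μ : SignedMeasure α) (f : α → ℝ) : ℝ :=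
  (∫ x, f x ∂μ.toJordanDecomposition.posPart) - ∫ x, f x ∂μ.toJordanDecomposition.negPart

noncomputable def sintOn {α : Type*} [MeasurableSpace α] (μ : SignedMeasure α) (s : Set α)
    (f : α → ℝ) : ℝ := sint μ (s.indicator f)

noncomputable def tvN (d : ℕ) (μ : SignedMeasure (XX d)) : EReal :=
  sSup {r : EReal | ∃ φ : XX d → ℝ, LocalC1 d φ ∧ (∀ x, |φ x| ≤ 1) ∧ r = ((sint μ φ : ℝ) : EReal)}

noncomputable def bvN (d : ℕ) (μ : SignedMeasure (XX d)) : EReal :=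
  sSup {r : EReal | ∃ (i : Site d) (φ : XX d → ℝ), LocalC1 d φ ∧ (∀ x, |φ x| ≤ 1) ∧
    r = ((sint μ (pd d φ i) : ℝ) : EReal)}

def PiecewiseC2Expanding (T : ℝ → ℝ) (lam : ℝ) : Prop :=
  Set.MapsTo T (Set.Icc 0 1) (Set.Icc 0 1) ∧
    ∃ (N : ℕ) (a : ℕ → ℝ), 0 < N ∧ a 0 = 0 ∧ a N = 1 ∧ (∀ j < N, a j < a (j + 1)) ∧
      ∀ j < N, ∃ g : ℝ → ℝ, ContDiffOn ℝ 2 g (Set.Icc (a j) (a (j + 1))) ∧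
        (∀ t ∈ Set.Ioo (a j) (a (j + 1)), T t = g t) ∧
        ∀ t ∈ Set.Icc (a j) (a (j + 1)),
          lam ≤ |derivWithin g (Set.Icc (a j) (a (j + 1))) t|

noncomputable def F0 (d : ℕ) (T : ℝ → ℝ) (x : XX d) : XX d :=
  fun i => Set.projIcc (0:ℝ) 1 zero_le_one (T (x i))

open Classical in
noncomputable def Phi (d : ℕ) (A : Site d → Set ℝ) (x : XX d) : XX d :=
  fun i =>
    if h : ∃ v ∈ VFinset d, (x i : ℝ) ∈ A v ∧ (x (i + v) : ℝ) ∈ A (-v) then x (i + h.choose)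
    else x i

noncomputable def Feps (d : ℕ) (T : ℝ → ℝ) (A : Site d → Set ℝ) : XX d → XX d :=
  Phi d A ∘ F0 d T

open Classical in
noncomputable def PhiDec (d : ℕ) (A : Site d → Set ℝ) (i : Site d) (x : XX d) : XX d :=
  fun k =>
    if (k - i ∈ VFinset d ∨ k - i = 0) ∧ (k - i ∈ VFinset d → (x k : ℝ) ∈ A (-(k - i))) then x k
    else Phi d A x k

def GoodIntervals (d : ℕ) (ε : ℝ) (A : Site d → Set ℝ) : Prop :=
  (∀ v ∈ VFinset d, ∃ a b : ℝ, a < b ∧ b - a = ε ∧ 0 ≤ a ∧ b ≤ 1 ∧ A v = Set.Ioo a b) ∧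
    ∀ v ∈ VFinset d, ∀ w ∈ VFinset d, v ≠ w → Disjoint (A v) (A w)

def SepLB (d : ℕ) (A : Site d → Set ℝ) (ℓ : ℝ) : Prop :=
  0 < ℓ ∧ ∀ v ∈ VFinset d, ∀ w ∈ VFinset d, v ≠ w → ∀ s ∈ A v, ∀ t ∈ A w, ℓ ≤ |s - t|

def Delta (d : ℕ) (A : Site d → Set ℝ) (i v : Site d) : Set (XX d) :=
  {x | (x i : ℝ) ∈ A v ∧ (x (i + v) : ℝ) ∈ A (-v)}

def DeltaU (d : ℕ) (A : Site d → Set ℝ) (i : Site d) : Set (XX d) :=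
  ⋃ v ∈ VFinset d, Delta d A i v

noncomputable def bvNM (d : ℕ) (μ : Measure (XX d)) : EReal :=
  sSup {r : EReal | ∃ (i : Site d) (φ : XX d → ℝ), LocalC1 d φ ∧ (∀ x, |φ x| ≤ 1) ∧
    r = ((∫ x, pd d φ i x ∂μ : ℝ) : EReal)}

noncomputable def l1dist (d : ℕ) (Λ₁ Λ₂ : Finset (Site d)) : ℕ :=
  sInf {m : ℕ | ∃ a ∈ Λ₁, ∃ b ∈ Λ₂, m = ∑ j, (a j - b j).natAbs}


/-! At site `k` the coupling reads only `x k` and the one neighbour `x (k + v)` selected by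
`x k ∈ A v`, which is unique because the intervals are disjoint. The decoupled map keeps `x k`
exactly at the sites whose selected neighbour could be `i`, so none of its other values reads `x i`. -/

lemma zero_notMem_VFinset (d : ℕ) : (0 : Site d) ∉ VFinset d := by
  simp only [VFinset, Finset.mem_union, Finset.mem_image, Finset.mem_univ, true_and]
  rintro (⟨j, hj⟩ | ⟨j, hj⟩) <;> simpa using congrFun hj j

lemma neg_mem_VFinset {d : ℕ} {v : Site d} (hv : v ∈ VFinset d) : -v ∈ VFinset d := by
  simp only [VFinset, Finset.mem_union, Finset.mem_image, Finset.mem_univ, true_and] at hv ⊢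
  rcases hv with ⟨j, rfl⟩ | ⟨j, rfl⟩
  · exact Or.inr ⟨j, rfl⟩
  · exact Or.inl ⟨j, (neg_neg _).symm⟩

section Coupling

variable {d : ℕ} {A : Site d → Set ℝ} {x y : XX d} {i k : Site d}

lemma Phi_apply_of_mem (hA : (VFinset d : Set (Site d)).PairwiseDisjoint A) {v : Site d}
    (hv : v ∈ VFinset d) (hk : (x k : ℝ) ∈ A v) (hkv : (x (k + v) : ℝ) ∈ A (-v)) :
    Phi d A x k = x (k + v) := by
  have hex : ∃ w ∈ VFinset d, (x k : ℝ) ∈ A w ∧ (x (k + w) : ℝ) ∈ A (-w) := ⟨v, hv, hk, hkv⟩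
  obtain ⟨hw, hkw, -⟩ := hex.choose_spec
  have hwv : hex.choose = v :=
    hA.elim hw hv (Set.not_disjoint_iff.mpr ⟨_, hkw, hk⟩)
  simp only [Phi, dif_pos hex, hwv]

lemma Phi_apply_of_forall_notMem
    (h : ∀ v ∈ VFinset d, (x k : ℝ) ∈ A v → (x (k + v) : ℝ) ∉ A (-v)) :
    Phi d A x k = x k := by
  have hex : ¬∃ v ∈ VFinset d, (x k : ℝ) ∈ A v ∧ (x (k + v) : ℝ) ∈ A (-v) :=
    fun ⟨v, hv, hk, hkv⟩ => h v hv hk hkv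
  simp only [Phi, dif_neg hex]

lemma Phi_apply_congr (hA : (VFinset d : Set (Site d)).PairwiseDisjoint A) (hk : x k = y k)
    (hnbr : ∀ v ∈ VFinset d, (x k : ℝ) ∈ A v → x (k + v) = y (k + v)) :
    Phi d A x k = Phi d A y k := by
  by_cases hex : ∃ v ∈ VFinset d, (x k : ℝ) ∈ A v ∧ (x (k + v) : ℝ) ∈ A (-v)
  · obtain ⟨v, hv, hxk, hxkv⟩ := hex
    have hyk : (y k : ℝ) ∈ A v := hk ▸ hxk
    have hykv : (y (k + v) : ℝ) ∈ A (-v) := hnbr v hv hxk ▸ hxkv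
    rw [Phi_apply_of_mem hA hv hxk hxkv, Phi_apply_of_mem hA hv hyk hykv, hnbr v hv hxk]
  · have hex' : ∀ v ∈ VFinset d, (x k : ℝ) ∈ A v → (x (k + v) : ℝ) ∉ A (-v) :=
      fun v hv hxk hxkv => hex ⟨v, hv, hxk, hxkv⟩
    have hey : ∀ v ∈ VFinset d, (y k : ℝ) ∈ A v → (y (k + v) : ℝ) ∉ A (-v) := by
      intro v hv hyk
      rw [← hk] at hyk
      rw [← hnbr v hv hyk]
      exact hex' v hv hyk
    rw [Phi_apply_of_forall_notMem hex', Phi_apply_of_forall_notMem hey, hk]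

lemma PhiDec_apply_self (x : XX d) : PhiDec d A i x i = x i := by
  have hfrozen : (i - i ∈ VFinset d ∨ i - i = 0) ∧
      (i - i ∈ VFinset d → (x i : ℝ) ∈ A (-(i - i))) :=
    ⟨Or.inr (sub_self i), fun h => absurd (sub_self i ▸ h) (zero_notMem_VFinset d)⟩
  simp only [PhiDec, if_pos hfrozen]

lemma PhiDec_apply_congr (hA : (VFinset d : Set (Site d)).PairwiseDisjoint A)
    (hxy : ∀ k, k ≠ i → x k = y k) (hk : k ≠ i) :
    PhiDec d A i x k = PhiDec d A i y k := by
  have hxk : x k = y k := hxy k hk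
  by_cases hfrozen : (k - i ∈ VFinset d ∨ k - i = 0) ∧
      (k - i ∈ VFinset d → (x k : ℝ) ∈ A (-(k - i)))
  · have hfrozen' : (k - i ∈ VFinset d ∨ k - i = 0) ∧
        (k - i ∈ VFinset d → (y k : ℝ) ∈ A (-(k - i))) := hxk ▸ hfrozen
    simp only [PhiDec, if_pos hfrozen, if_pos hfrozen', hxk]
  · have hfrozen' : ¬((k - i ∈ VFinset d ∨ k - i = 0) ∧
        (k - i ∈ VFinset d → (y k : ℝ) ∈ A (-(k - i)))) := hxk ▸ hfrozen
    simp only [PhiDec, if_neg hfrozen, if_neg hfrozen']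
    refine Phi_apply_congr hA hxk fun v hv hxkv => hxy _ fun hvi => hfrozen ?_
    -- a selected neighbour `k + v = i` means `k - i = -v`, which is exactly the frozen case
    have hki : k - i = -v := by rw [← hvi]; abel
    exact ⟨Or.inl (hki ▸ neg_mem_VFinset hv), fun _ => by rwa [hki, neg_neg]⟩

end Coupling

theorem stmt11_general (d : ℕ) (ε : ℝ) (A : Site d → Set ℝ)
    (hA : GoodIntervals d ε A) (i : Site d) :
    (∀ x : XX d, PhiDec d A i x i = x i) ∧
    (∀ x y : XX d, (∀ k : Site d, k ≠ i → x k = y k) →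
      ∀ k : Site d, k ≠ i → PhiDec d A i x k = PhiDec d A i y k) :=
  ⟨fun x => PhiDec_apply_self x,
    fun _ _ hxy _ hk => PhiDec_apply_congr (fun v hv w hw hvw => hA.2 v hv w hw hvw) hxy hk⟩

theorem stmt11 (d : ℕ) (hd : 1 ≤ d) (ε : ℝ) (hε : 0 < ε) (A : Site d → Set ℝ)
    (hA : GoodIntervals d ε A) (i : Site d) :
    (∀ x : XX d, PhiDec d A i x i = x i) ∧
    (∀ x y : XX d, (∀ k : Site d, k ≠ i → x k = y k) →
      ∀ k : Site d, k ≠ i → PhiDec d A i x k = PhiDec d A i y k) :=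
  stmt11_general d ε A hA i
end

section
/- Let Λ be a finite set, let i ∈ Λ, and let h ∈ L^1([0,1]^Λ). Define g on [0,1] by g(t) = ∫ |h(x)| dx_{k≠i}, integrating out all coordinates except the i-th, evaluated at x_i = t. Then the directional variation of g is bounded by that of |h| in direction i, i.e. sup{∫_0^1 g(t)ψ'(t)dt : ψ ∈ C^1 with |ψ|_∞ ≤ 1} ≤ sup{∫_{[0,1]^Λ} |h|·∂_{x_i}ψ dx : ψ ∈ C^1([0,1]^Λ) with |ψ|_∞ ≤ 1}. -/
/-!
Every test function `ψ` of one variable lifts to the test function `z ↦ ψ (z i)` on the cube, with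
the same sup bound and with `∂ᵢ` of the lift equal to `ψ' (z i)`. So it suffices that
`∫ t, g t * ψ' t = ∫ z, |h z| * ψ' (z i)`, and this is Fubini combined with the fact that
overwriting one coordinate of a point of a product probability space by an independent sample
preserves the product measure.
-/

open MeasureTheory Set

section UpdatePi

variable {Λ : Type*} [Fintype Λ] [DecidableEq Λ] {α : Λ → Type*} [∀ j, MeasurableSpace (α j)]
  (μ : ∀ j, Measure (α j)) [∀ j, IsProbabilityMeasure (μ j)] (i : Λ)

theorem measurePreserving_update_pi :
    MeasurePreserving (fun p : α i × (∀ j, α j) => Function.update p.2 i p.1)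
      ((μ i).prod (Measure.pi μ)) (Measure.pi μ) := by
  have hmeas : Measurable fun p : α i × (∀ j, α j) => Function.update p.2 i p.1 :=
    measurable_update'.comp measurable_swap
  refine ⟨hmeas, (Measure.pi_eq fun s hs => ?_).symm⟩
  have hpre : (fun p : α i × (∀ j, α j) => Function.update p.2 i p.1) ⁻¹' univ.pi s =
      s i ×ˢ univ.pi (Function.update s i univ) := by
    ext ⟨t, z⟩
    simp [Function.forall_update_iff z fun j x => x ∈ s j,
      Function.forall_update_iff s fun j S => z j ∈ S]
  rw [Measure.map_apply hmeas (MeasurableSet.univ_pi hs), hpre, Measure.prod_prod, Measure.pi_pi,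
    Fintype.prod_eq_mul_prod_compl i, Fintype.prod_eq_mul_prod_compl i fun j => μ j (s j),
    Function.update_self, measure_univ, one_mul]
  congr 1
  refine Finset.prod_congr rfl fun j hj => ?_
  rw [Function.update_of_ne (by simpa using hj)]

theorem integral_integral_update_pi {E : Type*} [NormedAddCommGroup E] [NormedSpace ℝ E]
    {F : (∀ j, α j) → E} (hF : Integrable F (Measure.pi μ)) :
    ∫ t, ∫ z, F (Function.update z i t) ∂Measure.pi μ ∂μ i = ∫ z, F z ∂Measure.pi μ := by
  have hU := measurePreserving_update_pi μ i
  calc ∫ t, ∫ z, F (Function.update z i t) ∂Measure.pi μ ∂μ i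
      = ∫ p, F (Function.update p.2 i p.1) ∂(μ i).prod (Measure.pi μ) :=
        (integral_prod _ ((hU.integrable_comp hF.aestronglyMeasurable).mpr hF)).symm
    _ = ∫ z, F z ∂Measure.pi μ := by
        rw [← integral_map hU.measurable.aemeasurable (by rw [hU.map_eq]; exact hF.1),
          hU.map_eq]

end UpdatePi

theorem restrict_unitCube_eq_pi {Λ : Type*} [Fintype Λ] :
    volume.restrict (univ.pi fun _ : Λ => Icc (0 : ℝ) 1) =
      Measure.pi fun _ : Λ => volume.restrict (Icc (0 : ℝ) 1) := by
  rw [volume_pi, Measure.restrict_pi_pi]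

theorem integral_unitCube_marginal_mul {Λ : Type*} [Fintype Λ] [DecidableEq Λ] (i : Λ)
    {f : (Λ → ℝ) → ℝ} (hf : IntegrableOn f (univ.pi fun _ : Λ => Icc (0 : ℝ) 1))
    {φ : ℝ → ℝ} (hφ : ContinuousOn φ (Icc 0 1)) :
    ∫ t in Icc (0 : ℝ) 1,
        (∫ z in univ.pi fun _ : Λ => Icc (0 : ℝ) 1, f (Function.update z i t)) * φ t =
      ∫ z in univ.pi fun _ : Λ => Icc (0 : ℝ) 1, f z * φ (z i) := by
  have : IsProbabilityMeasure (volume.restrict (Icc (0 : ℝ) 1)) := ⟨by simp⟩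
  obtain ⟨C, hC⟩ := isCompact_Icc.exists_bound_of_continuousOn hφ
  have hfφ : Integrable (fun z : Λ → ℝ => f z * φ (z i))
      (volume.restrict (univ.pi fun _ : Λ => Icc (0 : ℝ) 1)) := by
    simp_rw [mul_comm (f _)]
    have hbox : MeasurableSet (univ.pi fun _ : Λ => Icc (0 : ℝ) 1) :=
      .univ_pi fun _ => measurableSet_Icc
    refine hf.bdd_mul (c := C) ?_ ?_
    · exact (hφ.comp (continuous_apply i).continuousOn
        fun z (hz : z ∈ univ.pi _) => hz i (mem_univ i)).aestronglyMeasurable hbox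
    · filter_upwards [ae_restrict_mem hbox] with z hz
      exact hC _ (hz i (mem_univ i))
  rw [restrict_unitCube_eq_pi] at hfφ ⊢
  rw [← integral_integral_update_pi _ i hfφ]
  simp only [Function.update_self, integral_mul_const]

theorem stmt13 (Λ : Type*) [Fintype Λ] [DecidableEq Λ] (i : Λ) (h : (Λ → ℝ) → ℝ)
    (hh : IntegrableOn h (Set.univ.pi fun _ : Λ => Set.Icc (0:ℝ) 1) volume) :
    sSup {r : EReal | ∃ ψ : ℝ → ℝ, ContDiff ℝ 1 ψ ∧ (∀ t, |ψ t| ≤ 1) ∧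
        r = ((∫ t in Set.Icc (0:ℝ) 1,
          (∫ z in Set.univ.pi fun _ : Λ => Set.Icc (0:ℝ) 1, |h (Function.update z i t)|) *
            deriv ψ t : ℝ) : EReal)} ≤
      sSup {r : EReal | ∃ ψ : (Λ → ℝ) → ℝ, ContDiff ℝ 1 ψ ∧ (∀ z, |ψ z| ≤ 1) ∧
        r = ((∫ z in Set.univ.pi fun _ : Λ => Set.Icc (0:ℝ) 1,
          |h z| * deriv (fun t => ψ (Function.update z i t)) (z i) : ℝ) : EReal)} := by
  refine sSup_le_sSup ?_
  rintro r ⟨ψ, hψ, hψ_le, rfl⟩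
  refine ⟨fun z => ψ (z i), hψ.comp (contDiff_apply ℝ ℝ i), fun z => hψ_le (z i), ?_⟩
  simp only [Function.update_self]
  rw [integral_unitCube_marginal_mul i hh.abs (hψ.continuous_deriv le_rfl).continuousOn]
end

section
/- Let g : [0,1]^2 → [0,∞) be integrable with finite directional variation in the first variable, V_1(g) := sup{∫_{[0,1]^2} g(x,y)·∂_xψ(x,y) dxdy : ψ ∈ C^1([0,1]^2), |ψ|_∞ ≤ 1} < ∞. Then for all Borel sets A, B ⊆ [0,1]: ∫_A ∫_B g(x,y) dy dx ≤ Leb(A)·(∫_{[0,1]^2} g dxdy + V_1(g)). In particular, if A is an interval of length ε and V_1(g) and ∫ g are both bounded by a constant K, then ∫_{A×B} g ≤ 2Kε. -/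
/-!
Let `H x = ∫₀¹ g (x, y) dy`. Testing the variation bound with `ψ (x, y) = φ x` gives
`∫₀¹ H φ' ≤ V` for every `C¹` function `φ` with `|φ| ≤ 1`, and `∫_A ∫_B g ≤ ∫_A H` since `g ≥ 0`.
For `m = |A|` put `w = 𝟙_A - m 𝟙_[0,1]`, so that `∫₀¹ H w = ∫_A H - m ∫₀¹ H` and every primitive
increment of `w` lies in `[-m, m]`. The sliding averages of the primitive of `w`, divided by `m`,
are admissible test functions; their derivatives are the sliding averages of `w / m`, which converge
to `w / m` almost everywhere by Lebesgue's differentiation theorem. Dominated convergence then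
gives `∫₀¹ H w ≤ m V`.
-/

open MeasureTheory Set Filter Topology
open scoped Interval

noncomputable def slidingAverage (f : ℝ → ℝ) (δ x : ℝ) : ℝ :=
  (2 * δ)⁻¹ * ∫ t in (x - δ)..(x + δ), f t

section slidingAverage

variable {f : ℝ → ℝ}

theorem MeasureTheory.LocallyIntegrable.intervalIntegrable (hf : LocallyIntegrable f) (a b : ℝ) :
    IntervalIntegrable f volume a b :=
  (hf.integrableOn_isCompact isCompact_uIcc).intervalIntegrable

theorem abs_slidingAverage_le {M : ℝ} (hf : ∀ t, |f t| ≤ M) (δ x : ℝ) :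
    |slidingAverage f δ x| ≤ M := by
  have hM : 0 ≤ M := (abs_nonneg _).trans (hf 0)
  have hI : |∫ t in (x - δ)..(x + δ), f t| ≤ M * |2 * δ| := by
    have := intervalIntegral.norm_integral_le_of_norm_le_const (a := x - δ) (b := x + δ)
      fun t _ => (Real.norm_eq_abs (f t)).le.trans (hf t)
    rwa [Real.norm_eq_abs, show x + δ - (x - δ) = 2 * δ by ring] at this
  rcases eq_or_ne δ 0 with rfl | hδ
  · simpa [slidingAverage] using hM
  calc |slidingAverage f δ x| = |2 * δ|⁻¹ * |∫ t in (x - δ)..(x + δ), f t| := by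
        rw [slidingAverage, abs_mul, abs_inv]
    _ ≤ |2 * δ|⁻¹ * (M * |2 * δ|) := by gcongr
    _ = M := by field_simp

theorem slidingAverage_eq_primitive_sub (hf : LocallyIntegrable f) (δ x : ℝ) :
    slidingAverage f δ x =
      (2 * δ)⁻¹ * ((∫ t in (0:ℝ)..(x + δ), f t) - ∫ t in (0:ℝ)..(x - δ), f t) := by
  rw [slidingAverage, intervalIntegral.integral_interval_sub_left
    (hf.intervalIntegrable _ _) (hf.intervalIntegrable _ _)]

theorem continuous_slidingAverage (hf : LocallyIntegrable f) (δ : ℝ) :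
    Continuous (slidingAverage f δ) := by
  have hF := intervalIntegral.continuous_primitive hf.intervalIntegrable 0
  simp_rw [funext (slidingAverage_eq_primitive_sub hf δ)]
  fun_prop

theorem hasDerivAt_slidingAverage_primitive (hf : LocallyIntegrable f) (δ x : ℝ) :
    HasDerivAt (slidingAverage (fun y => ∫ t in (0:ℝ)..y, f t) δ) (slidingAverage f δ x) x := by
  have hF := intervalIntegral.continuous_primitive hf.intervalIntegrable 0
  have hd : ∀ y, HasDerivAt (fun z => ∫ t in (0:ℝ)..z, ∫ s in (0:ℝ)..t, f s)
      (∫ s in (0:ℝ)..y, f s) y := fun y => (hF.integral_hasStrictDerivAt 0 y).hasDerivAt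
  rw [slidingAverage_eq_primitive_sub hf]
  simp_rw [funext (slidingAverage_eq_primitive_sub hF.locallyIntegrable δ)]
  exact (((hd _).comp_add_const x δ).sub ((hd _).comp_sub_const x δ)).const_mul _

theorem contDiff_slidingAverage_primitive (hf : LocallyIntegrable f) (δ : ℝ) :
    ContDiff ℝ 1 (slidingAverage (fun y => ∫ t in (0:ℝ)..y, f t) δ) := by
  rw [contDiff_one_iff_deriv]
  refine ⟨fun x => (hasDerivAt_slidingAverage_primitive hf δ x).differentiableAt, ?_⟩
  rw [funext fun x => (hasDerivAt_slidingAverage_primitive hf δ x).deriv]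
  exact continuous_slidingAverage hf δ

theorem ae_tendsto_slidingAverage (hf : LocallyIntegrable f) :
    ∀ᵐ x, Tendsto (fun δ => slidingAverage f δ x) (𝓝[>] 0) (𝓝 (f x)) := by
  filter_upwards [IsUnifLocDoublingMeasure.ae_tendsto_average volume hf 1] with x hx
  refine (hx (fun _ => x) (fun δ => δ) tendsto_id
    (eventually_mem_nhdsWithin.mono fun δ hδ => ?_)).congr'
      (eventually_mem_nhdsWithin.mono fun δ (hδ : 0 < δ) => ?_)
  · simpa using hδ.le
  · rw [setAverage_eq, Real.closedBall_eq_Icc, Real.volume_real_Icc, integral_Icc_eq_integral_Ioc,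
      ← intervalIntegral.integral_of_le (by linarith), smul_eq_mul,
      show x + δ - (x - δ) = 2 * δ by ring, max_eq_left (by linarith)]
    rfl

end slidingAverage

theorem setIntegral_mul_le_of_abs_primitive_le {H w : ℝ → ℝ} {S : Set ℝ} {C M V : ℝ}
    (hH : IntegrableOn H S) (hw : LocallyIntegrable w) (hwC : ∀ x, |w x| ≤ C)
    (hM : 0 < M) (hprim : ∀ x, |∫ t in (0:ℝ)..x, w t| ≤ M)
    (hV : ∀ φ : ℝ → ℝ, ContDiff ℝ 1 φ → (∀ x, |φ x| ≤ 1) → ∫ x in S, H x * deriv φ x ≤ V) :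
    ∫ x in S, H x * w x ≤ M * V := by
  set u : ℝ → ℝ := fun y => ∫ t in (0:ℝ)..y, w t
  have htest : ∀ δ, ∫ x in S, H x * (M⁻¹ * slidingAverage w δ x) ≤ V := by
    intro δ
    have hderiv : deriv (fun x => M⁻¹ * slidingAverage u δ x) =
        fun x => M⁻¹ * slidingAverage w δ x :=
      funext fun x => ((hasDerivAt_slidingAverage_primitive hw δ x).const_mul _).deriv
    have hφ : ∀ x, |M⁻¹ * slidingAverage u δ x| ≤ 1 := fun x => by
      rw [abs_mul, abs_inv, abs_of_pos hM, inv_mul_le_one₀ hM]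
      exact abs_slidingAverage_le hprim δ x
    have h := hV _ (contDiff_const.mul (contDiff_slidingAverage_primitive hw δ)) hφ
    rwa [hderiv] at h
  have hlim : Tendsto (fun δ => ∫ x in S, H x * (M⁻¹ * slidingAverage w δ x)) (𝓝[>] 0)
      (𝓝 (∫ x in S, H x * (M⁻¹ * w x))) := by
    refine tendsto_integral_filter_of_dominated_convergence (fun x => |H x| * (M⁻¹ * C))
      (Eventually.of_forall fun δ => hH.aestronglyMeasurable.mul
        (continuous_const.mul (continuous_slidingAverage hw δ)).aestronglyMeasurable)
      (Eventually.of_forall fun δ => Eventually.of_forall fun x => ?_)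
      (hH.abs.mul_const _)
      (ae_restrict_of_ae ((ae_tendsto_slidingAverage hw).mono fun x hx =>
        (hx.const_mul M⁻¹).const_mul (H x)))
    rw [Real.norm_eq_abs, abs_mul, abs_mul, abs_inv, abs_of_pos hM]
    gcongr
    exact abs_slidingAverage_le hwC δ x
  have hle : ∫ x in S, H x * (M⁻¹ * w x) ≤ V := le_of_tendsto hlim (Eventually.of_forall htest)
  simp_rw [mul_left_comm (H _) M⁻¹, integral_const_mul, inv_mul_le_iff₀ hM] at hle
  exact hle

theorem abs_intervalIntegral_indicator_sub_le {A I : Set ℝ} (hA : MeasurableSet A)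
    (hAfin : volume A ≠ ⊤) (hI : MeasurableSet I) (hI1 : volume I ≤ 1) (a b : ℝ) :
    |∫ t in a..b, (A.indicator 1 t - volume.real A * I.indicator 1 t)| ≤ volume.real A := by
  have hIfin : volume I ≠ ⊤ := ne_top_of_le_ne_top ENNReal.one_ne_top hI1
  rw [intervalIntegral.abs_integral_eq_abs_integral_uIoc, integral_sub, integral_const_mul,
    integral_indicator_one hA, integral_indicator_one hI,
    measureReal_restrict_apply hA, measureReal_restrict_apply hI]
  · refine abs_sub_le_of_nonneg_of_le measureReal_nonneg
      (measureReal_mono inter_subset_left hAfin) (by positivity) ?_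
    calc volume.real A * volume.real (I ∩ Ι a b) ≤ volume.real A * 1 := by
          gcongr
          exact (measureReal_mono inter_subset_left hIfin).trans
            (ENNReal.toReal_le_of_le_ofReal zero_le_one (by simpa using hI1))
      _ = volume.real A := mul_one _
  · exact ((integrable_indicator_iff hA).2
      (integrableOn_const (C := (1:ℝ)) hAfin)).integrableOn
  · exact ((integrable_indicator_iff hI).2
      (integrableOn_const (C := (1:ℝ)) hIfin)).integrableOn.const_mul _

theorem setIntegral_le_of_variation_le {H : ℝ → ℝ} {V : ℝ} (hH : IntegrableOn H (Icc 0 1))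
    (hV : ∀ φ : ℝ → ℝ, ContDiff ℝ 1 φ → (∀ x, |φ x| ≤ 1) → ∫ x in Icc 0 1, H x * deriv φ x ≤ V)
    {A : Set ℝ} (hA : MeasurableSet A) (hAI : A ⊆ Icc 0 1) :
    ∫ x in A, H x ≤ volume.real A * ((∫ x in Icc 0 1, H x) + V) := by
  have hAfin : volume A ≠ ⊤ := measure_ne_top_of_subset hAI (by simp)
  rcases (measureReal_nonneg (s := A)).eq_or_lt with hA0 | hApos
  · rw [← hA0, Measure.restrict_eq_zero.2 ((measureReal_eq_zero_iff hAfin).1 hA0.symm)]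
    simp
  set m := volume.real A
  have hprim := abs_intervalIntegral_indicator_sub_le (I := Icc (0:ℝ) 1) hA hAfin
    measurableSet_Icc (by simp) 0
  have hbound : ∀ x, |A.indicator 1 x - m * (Icc (0:ℝ) 1).indicator 1 x| ≤ 1 + m := fun x => by
    refine (abs_sub _ _).trans (add_le_add ?_ ?_) <;>
      simp only [abs_mul, abs_of_pos hApos, Set.indicator, Pi.one_apply] <;> split_ifs <;>
      simp [hApos.le]
  have hwint : Integrable (fun x => A.indicator 1 x - m * (Icc (0:ℝ) 1).indicator 1 x) :=
    ((integrable_indicator_iff hA).2 (integrableOn_const (C := (1:ℝ)) hAfin)).sub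
      (((integrable_indicator_iff measurableSet_Icc).2
        (integrableOn_const (C := (1:ℝ)) (by simp))).const_mul m)
  have key := setIntegral_mul_le_of_abs_primitive_le hH hwint.locallyIntegrable hbound hApos
    hprim hV
  have hsplit : ∫ x in Icc 0 1, H x * (A.indicator 1 x - m * (Icc (0:ℝ) 1).indicator 1 x) =
      (∫ x in A, H x) - m * ∫ x in Icc 0 1, H x := by
    rw [setIntegral_congr_fun measurableSet_Icc (g := fun x => A.indicator H x - m * H x)
      fun x hx => by simp [Set.indicator, hx]; split_ifs <;> ring,
      integral_sub (hH.indicator hA) (hH.const_mul m), integral_const_mul,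
      setIntegral_indicator hA, inter_eq_self_of_subset_right hAI]
  rw [mul_add]
  linarith

section Marginal

variable {α β : Type*} [MeasurableSpace α] [MeasurableSpace β] {μ : Measure α} {ν : Measure β}
  [SFinite μ] [SFinite ν]

theorem MeasureTheory.IntegrableOn.integral_prod_left {f : α × β → ℝ} {s : Set α} {t : Set β}
    (hf : IntegrableOn f (s ×ˢ t) (μ.prod ν)) :
    IntegrableOn (fun x => ∫ y in t, f (x, y) ∂ν) s μ := by
  rw [IntegrableOn, ← Measure.prod_restrict] at hf
  exact hf.integral_prod_left

theorem setIntegral_setIntegral_mono_right {f : α × β → ℝ} (hf : ∀ p, 0 ≤ f p) {s : Set α}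
    {t t' : Set β} (hf' : IntegrableOn f (s ×ˢ t') (μ.prod ν)) (htt' : t ⊆ t') :
    ∫ x in s, ∫ y in t, f (x, y) ∂ν ∂μ ≤ ∫ x in s, ∫ y in t', f (x, y) ∂ν ∂μ := by
  have hst : s ×ˢ t ⊆ s ×ˢ t' := prod_mono subset_rfl htt'
  rw [← setIntegral_prod _ hf', ← setIntegral_prod _ (hf'.mono_set hst)]
  exact setIntegral_mono_set hf' (ae_of_all _ fun p => hf p) hst.eventuallyLE

end Marginal

theorem setIntegral_marginal_mul_deriv_le {g : ℝ × ℝ → ℝ} {S T : Set ℝ} {V : ℝ}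
    (hS : IsCompact S) (hT : IsCompact T) (hg : IntegrableOn g (S ×ˢ T))
    (hV : ∀ ψ : ℝ × ℝ → ℝ, ContDiff ℝ 1 ψ → (∀ p, |ψ p| ≤ 1) →
      ∫ p in S ×ˢ T, g p * deriv (fun s => ψ (s, p.2)) p.1 ≤ V)
    {φ : ℝ → ℝ} (hφ : ContDiff ℝ 1 φ) (hφ1 : ∀ x, |φ x| ≤ 1) :
    ∫ x in S, (∫ y in T, g (x, y)) * deriv φ x ≤ V := by
  have hint : IntegrableOn (fun p => g p * deriv φ p.1) (S ×ˢ T) :=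
    hg.mul_continuousOn ((hφ.continuous_deriv le_rfl).comp continuous_fst).continuousOn
      (hS.prod hT)
  have h := hV (fun p => φ p.1) (hφ.comp contDiff_fst) fun p => hφ1 p.1
  rw [Measure.volume_eq_prod] at hint h
  rw [setIntegral_prod _ hint] at h
  simpa only [integral_mul_const] using h

theorem stmt14_general (g : ℝ × ℝ → ℝ) (hpos : ∀ p, 0 ≤ g p)
    (hint : IntegrableOn g (Set.Icc (0:ℝ) 1 ×ˢ Set.Icc (0:ℝ) 1) volume)
    (Vg : ℝ)
    (hV : ∀ ψ : ℝ × ℝ → ℝ, ContDiff ℝ 1 ψ → (∀ p, |ψ p| ≤ 1) →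
      (∫ p in Set.Icc (0:ℝ) 1 ×ˢ Set.Icc (0:ℝ) 1, g p * deriv (fun s => ψ (s, p.2)) p.1) ≤ Vg) :
    (∀ A B : Set ℝ, MeasurableSet A → MeasurableSet B → A ⊆ Set.Icc 0 1 → B ⊆ Set.Icc 0 1 →
      (∫ x in A, ∫ y in B, g (x, y)) ≤
        (volume A).toReal * ((∫ p in Set.Icc (0:ℝ) 1 ×ˢ Set.Icc (0:ℝ) 1, g p) + Vg)) ∧
    (∀ (K ε a b : ℝ) (B : Set ℝ), MeasurableSet B → B ⊆ Set.Icc 0 1 → a ≤ b → b - a = ε →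
      Set.Ioo a b ⊆ Set.Icc 0 1 → Vg ≤ K →
      (∫ p in Set.Icc (0:ℝ) 1 ×ˢ Set.Icc (0:ℝ) 1, g p) ≤ K →
      (∫ p in Set.Ioo a b ×ˢ B, g p) ≤ 2 * K * ε) := by
  have hfubini : ∀ {A B : Set ℝ}, A ⊆ Icc 0 1 → B ⊆ Icc 0 1 →
      ∫ p in A ×ˢ B, g p = ∫ x in A, ∫ y in B, g (x, y) := fun hA hB =>
    setIntegral_prod _ (hint.mono_set (prod_mono hA hB))
  have hbound : ∀ A B : Set ℝ, MeasurableSet A → MeasurableSet B → A ⊆ Icc 0 1 →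
      B ⊆ Icc 0 1 → (∫ x in A, ∫ y in B, g (x, y)) ≤
        volume.real A * ((∫ p in Icc (0:ℝ) 1 ×ˢ Icc (0:ℝ) 1, g p) + Vg) := by
    intro A B hA _ hAI hBI
    rw [hfubini subset_rfl subset_rfl]
    calc (∫ x in A, ∫ y in B, g (x, y)) ≤ ∫ x in A, ∫ y in Icc 0 1, g (x, y) :=
          setIntegral_setIntegral_mono_right hpos (hint.mono_set (prod_mono hAI subset_rfl)) hBI
      _ ≤ _ := setIntegral_le_of_variation_le hint.integral_prod_left
          (fun _ hφ hφ1 => setIntegral_marginal_mul_deriv_le isCompact_Icc isCompact_Icc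
            hint hV hφ hφ1) hA hAI
  refine ⟨hbound, fun K ε a b B hB hBI hab hε hIoo hVK hIK => ?_⟩
  calc ∫ p in Ioo a b ×ˢ B, g p = ∫ x in Ioo a b, ∫ y in B, g (x, y) := hfubini hIoo hBI
    _ ≤ volume.real (Ioo a b) * ((∫ p in Icc (0:ℝ) 1 ×ˢ Icc (0:ℝ) 1, g p) + Vg) :=
        hbound _ B measurableSet_Ioo hB hIoo hBI
    _ ≤ ε * (K + K) := by
        rw [Real.volume_real_Ioo_of_le hab, hε]
        gcongr
        linarith
    _ = 2 * K * ε := by ring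

theorem stmt14 (g : ℝ × ℝ → ℝ) (hmeas : Measurable g) (hpos : ∀ p, 0 ≤ g p)
    (hint : IntegrableOn g (Set.Icc (0:ℝ) 1 ×ˢ Set.Icc (0:ℝ) 1) volume)
    (Vg : ℝ)
    (hV : ∀ ψ : ℝ × ℝ → ℝ, ContDiff ℝ 1 ψ → (∀ p, |ψ p| ≤ 1) →
      (∫ p in Set.Icc (0:ℝ) 1 ×ˢ Set.Icc (0:ℝ) 1, g p * deriv (fun s => ψ (s, p.2)) p.1) ≤ Vg) :
    (∀ A B : Set ℝ, MeasurableSet A → MeasurableSet B → A ⊆ Set.Icc 0 1 → B ⊆ Set.Icc 0 1 →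
      (∫ x in A, ∫ y in B, g (x, y)) ≤
        (volume A).toReal * ((∫ p in Set.Icc (0:ℝ) 1 ×ˢ Set.Icc (0:ℝ) 1, g p) + Vg)) ∧
    (∀ (K ε a b : ℝ) (B : Set ℝ), MeasurableSet B → B ⊆ Set.Icc 0 1 → a ≤ b → b - a = ε →
      Set.Ioo a b ⊆ Set.Icc 0 1 → Vg ≤ K →
      (∫ p in Set.Icc (0:ℝ) 1 ×ˢ Set.Icc (0:ℝ) 1, g p) ≤ K →
      (∫ p in Set.Ioo a b ×ˢ B, g p) ≤ 2 * K * ε) :=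
  stmt14_general g hpos hint Vg hV
end
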